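/- Let λ₁ ≥ λ₂ ≥ ... ≥ λ_p ≥ 0 with λ₁ > 0 and define J_λ(x) = Σᵢ λᵢ x₍ᵢ₎² using the decreasingly sorted squared entries of x. Then √(J_λ(·)) satisfies the triangle inequality: for all x, y ∈ ℝ^p, √(J_λ(x + y)) ≤ √(J_λ(x)) + √(J_λ(y)). -/

import Mathlib

/-- The squared entries of `x` sorted in non-increasing order. -/
noncomputable def sortedSq {p : ℕ} (x : Fin p → ℝ) : Fin p → ℝ :=
  fun i => (x (Tuple.sort (fun j => -((x j) ^ 2)) i)) ^ 2

/-- The ordered ℓ₂ regularizer `J_λ(x) = Σᵢ λᵢ x₍ᵢ₎²`. -/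
noncomputable def Jlam {p : ℕ} (lam x : Fin p → ℝ) : ℝ :=
  ∑ i, lam i * sortedSq x i

/-!
Sort the entries of `x + y` by decreasing square via a permutation `τ`. Then
`J_λ(x + y) = Σ λᵢ (x_{τ i} + y_{τ i})²` is the squared norm of a sum in a weighted ℓ₂ space, so
Minkowski's inequality bounds its root by the roots of `Σ λᵢ x_{τ i}²` and `Σ λᵢ y_{τ i}²`. By the
rearrangement inequality neither of these exceeds the corresponding `J_λ`, since the sorted order
pairs the largest weights with the largest squares.
-/

theorem Real.sqrt_sum_mul_add_sq_le {ι : Type*} [Fintype ι] (w : ι → ℝ) (hw : ∀ i, 0 ≤ w i)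
    (a b : ι → ℝ) :
    √(∑ i, w i * (a i + b i) ^ 2) ≤ √(∑ i, w i * a i ^ 2) + √(∑ i, w i * b i ^ 2) := by
  let e : (ι → ℝ) → EuclideanSpace ℝ ι := fun z => WithLp.toLp 2 fun i => √(w i) * z i
  have norm_e : ∀ z, ‖e z‖ = √(∑ i, w i * z i ^ 2) := fun z => by
    simp only [e, EuclideanSpace.norm_eq, Real.norm_eq_abs, sq_abs, mul_pow,
      Real.sq_sqrt (hw _)]
  have e_add : e (a + b) = e a + e b := by
    simp only [e, ← WithLp.toLp_add, Pi.add_apply, mul_add]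
    rfl
  have := norm_add_le (e a) (e b)
  rwa [← e_add, norm_e, norm_e, norm_e] at this

theorem sortedSq_antitone {p : ℕ} (x : Fin p → ℝ) : Antitone (sortedSq x) := fun _ _ hij =>
  neg_le_neg_iff.mp (Tuple.monotone_sort (fun j => -x j ^ 2) hij)

theorem sum_mul_sq_comp_perm_le_Jlam {p : ℕ} {lam : Fin p → ℝ} (hmono : Antitone lam)
    (x : Fin p → ℝ) (τ : Equiv.Perm (Fin p)) :
    ∑ i, lam i * x (τ i) ^ 2 ≤ Jlam lam x := by
  let σ := Tuple.sort fun j => -x j ^ 2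
  have hsorted : ∀ i, sortedSq x ((τ.trans σ.symm) i) = x (τ i) ^ 2 := fun i => by
    simp [sortedSq, σ]
  simpa only [Jlam, hsorted] using
    (hmono.monovary (sortedSq_antitone x)).sum_mul_comp_perm_le_sum_mul (σ := τ.trans σ.symm)

theorem stmt2 {p : ℕ} (lam : Fin p → ℝ) (hmono : Antitone lam)
    (hpos : ∀ i, 0 < lam i) (x y : Fin p → ℝ) :
    Real.sqrt (Jlam lam (x + y)) ≤ Real.sqrt (Jlam lam x) + Real.sqrt (Jlam lam y) := by
  let τ := Tuple.sort fun j => -(x + y) j ^ 2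
  calc √(Jlam lam (x + y)) = √(∑ i, lam i * (x (τ i) + y (τ i)) ^ 2) := rfl
    _ ≤ √(∑ i, lam i * x (τ i) ^ 2) + √(∑ i, lam i * y (τ i) ^ 2) :=
      Real.sqrt_sum_mul_add_sq_le lam (fun i => (hpos i).le) _ _
    _ ≤ √(Jlam lam x) + √(Jlam lam y) := by
      gcongr <;> exact sum_mul_sq_comp_perm_le_Jlam hmono _ τ
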